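/- Fix 0 < δ < 1 and let t > 0 satisfy erf(t) = δ. Let a : ℝ → ℝ be a function such that for every ε > 0, erfc(a(ε)) − e^ε · erfc(√(a(ε)² + ε)) = 2δ. Then (a(ε) + √(a(ε)² + ε))/ε tends to 1/(2t) as ε → 0 from the right. (Equivalently, given fixed δ, the optimal Gaussian noise amount σ_DP-OPT = (a(ε)+√(a(ε)²+ε))·Δ/(ε√2) for (ε,δ)-differential privacy converges to its upper bound Δ/(2√2·inverf(δ)) as ε → 0.) -/

import Mathlib

/-!
For `ε > 0` the profile `b ↦ erfc b - e^ε erfc √(b² + ε)` is strictly decreasing, and as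
`ε → 0⁺` it converges pointwise to `erfc b - erfc |b|`, which is `2 erf (-b)` for `b ≤ 0`.
So the solution `a ε` of the level-`2 erf t` equation is squeezed towards `-t`, whence
`√(a² + ε) → t`, and `(a + √(a² + ε))/ε = 1/(√(a² + ε) - a) → 1/(2t)`.
-/

open Real

/-- The Gauss error function `erf x = (2/√π) ∫₀ˣ e^{−t²} dt`. -/
noncomputable def erf (x : ℝ) : ℝ := 2 / Real.sqrt Real.pi * ∫ t in (0:ℝ)..x, Real.exp (-t ^ 2)

/-- The complementary error function `erfc x = 1 - erf x`. -/
noncomputable def erfc (x : ℝ) : ℝ := 1 - erf x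

open Filter Topology

lemma hasDerivAt_erf (x : ℝ) : HasDerivAt erf (2 / √π * exp (-x ^ 2)) x := by
  have hc : Continuous fun t : ℝ => exp (-t ^ 2) := by fun_prop
  exact (intervalIntegral.integral_hasDerivAt_right (hc.intervalIntegrable 0 x)
    (hc.stronglyMeasurableAtFilter _ _) hc.continuousAt).const_mul _

lemma continuous_erf : Continuous erf :=
  continuous_iff_continuousAt.2 fun x => (hasDerivAt_erf x).continuousAt

lemma erf_strictMono : StrictMono erf :=
  strictMono_of_hasDerivAt_pos hasDerivAt_erf fun _ => by positivity

lemma erf_neg (x : ℝ) : erf (-x) = -erf x := by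
  have h := intervalIntegral.integral_comp_neg (a := 0) (b := x) fun t : ℝ => exp (-t ^ 2)
  simp only [even_two, Even.neg_pow, neg_zero] at h
  rw [erf, erf, h, intervalIntegral.integral_symm (-x) 0]
  ring

lemma hasDerivAt_erfc (x : ℝ) : HasDerivAt erfc (-(2 / √π * exp (-x ^ 2))) x :=
  (hasDerivAt_erf x).const_sub 1

lemma continuous_erfc : Continuous erfc := continuous_const.sub continuous_erf

lemma lt_sqrt_sq_add {ε : ℝ} (hε : 0 < ε) (b : ℝ) : b < √(b ^ 2 + ε) :=
  calc b ≤ |b| := le_abs_self b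
  _ = √(b ^ 2) := (sqrt_sq_eq_abs b).symm
  _ < √(b ^ 2 + ε) := sqrt_lt_sqrt (sq_nonneg b) (lt_add_of_pos_right _ hε)

/-- For `b = (ε/μ - μ/2)/√2` with `μ = Δ/σ`, this is `2δ` for the Gaussian mechanism of standard
deviation `σ` on a query of `ℓ₂`-sensitivity `Δ` at privacy level `ε`. -/
noncomputable def gaussianPrivacyProfile (ε b : ℝ) : ℝ :=
  erfc b - exp ε * erfc √(b ^ 2 + ε)

lemma hasDerivAt_gaussianPrivacyProfile {ε : ℝ} (hε : 0 < ε) (b : ℝ) :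
    HasDerivAt (gaussianPrivacyProfile ε)
      (2 / √π * exp (-b ^ 2) * (b / √(b ^ 2 + ε) - 1)) b := by
  have hpos : 0 < b ^ 2 + ε := by positivity
  have hsqrt : HasDerivAt (fun b : ℝ => √(b ^ 2 + ε)) (b / √(b ^ 2 + ε)) b := by
    convert ((hasDerivAt_pow 2 b).add_const ε).sqrt hpos.ne' using 1
    field_simp
    ring
  have hexp : exp ε * exp (-√(b ^ 2 + ε) ^ 2) = exp (-b ^ 2) := by
    rw [sq_sqrt hpos.le, ← exp_add]
    ring_nf
  refine ((hasDerivAt_erfc b).sub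
    (((hasDerivAt_erfc _).comp b hsqrt).const_mul (exp ε))).congr_deriv ?_
  linear_combination (2 / √π * (b / √(b ^ 2 + ε))) * hexp

lemma gaussianPrivacyProfile_strictAnti {ε : ℝ} (hε : 0 < ε) :
    StrictAnti (gaussianPrivacyProfile ε) := by
  refine strictAnti_of_hasDerivAt_neg (hasDerivAt_gaussianPrivacyProfile hε) fun b => ?_
  have hb : b / √(b ^ 2 + ε) < 1 :=
    (div_lt_one (sqrt_pos.2 (by positivity))).2 (lt_sqrt_sq_add hε b)
  exact mul_neg_of_pos_of_neg (by positivity : 0 < 2 / √π * exp (-b ^ 2)) (sub_neg.2 hb)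

lemma continuous_gaussianPrivacyProfile_left (b : ℝ) :
    Continuous fun ε => gaussianPrivacyProfile ε b :=
  continuous_const.sub <| continuous_exp.mul <|
    continuous_erfc.comp <| continuous_sqrt.comp <| continuous_const.add continuous_id

lemma gaussianPrivacyProfile_zero_of_nonpos {c : ℝ} (hc : c ≤ 0) :
    gaussianPrivacyProfile 0 c = 2 * erf (-c) := by
  rw [gaussianPrivacyProfile, exp_zero, add_zero, sqrt_sq_eq_abs, abs_of_nonpos hc, erfc,
    erfc, erf_neg]
  ring

lemma eventually_lt_of_lt_gaussianPrivacyProfile_zero {y c : ℝ} {b : ℝ → ℝ}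
    (hb : ∀ ε > 0, gaussianPrivacyProfile ε (b ε) = y)
    (hc : y < gaussianPrivacyProfile 0 c) : ∀ᶠ ε in 𝓝[>] 0, c < b ε := by
  have hnear : ∀ᶠ ε in 𝓝[>] 0, y < gaussianPrivacyProfile ε c :=
    nhdsWithin_le_nhds <| (continuous_gaussianPrivacyProfile_left c).continuousAt.eventually
      (eventually_gt_nhds hc)
  filter_upwards [hnear, self_mem_nhdsWithin] with ε hyε hε
  rw [← hb ε hε] at hyε
  exact (gaussianPrivacyProfile_strictAnti hε).lt_iff_gt.1 hyε

lemma eventually_gt_of_gaussianPrivacyProfile_zero_lt {y c : ℝ} {b : ℝ → ℝ}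
    (hb : ∀ ε > 0, gaussianPrivacyProfile ε (b ε) = y)
    (hc : gaussianPrivacyProfile 0 c < y) : ∀ᶠ ε in 𝓝[>] 0, b ε < c := by
  have hnear : ∀ᶠ ε in 𝓝[>] 0, gaussianPrivacyProfile ε c < y :=
    nhdsWithin_le_nhds <| (continuous_gaussianPrivacyProfile_left c).continuousAt.eventually
      (eventually_lt_nhds hc)
  filter_upwards [hnear, self_mem_nhdsWithin] with ε hyε hε
  rw [← hb ε hε] at hyε
  exact (gaussianPrivacyProfile_strictAnti hε).lt_iff_gt.1 hyε

lemma tendsto_of_gaussianPrivacyProfile_eq {t : ℝ} (ht : 0 < t) {b : ℝ → ℝ}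
    (hb : ∀ ε > 0, gaussianPrivacyProfile ε (b ε) = 2 * erf t) :
    Tendsto b (𝓝[>] 0) (𝓝 (-t)) := by
  refine tendsto_order.2 ⟨fun c hc => ?_, fun c hc => ?_⟩
  · refine eventually_lt_of_lt_gaussianPrivacyProfile_zero hb ?_
    rw [gaussianPrivacyProfile_zero_of_nonpos (by linarith)]
    linarith [erf_strictMono (show t < -c by linarith)]
  · have hc' : -t < min c 0 := lt_min hc (by linarith)
    refine (eventually_gt_of_gaussianPrivacyProfile_zero_lt hb ?_).mono
      fun ε h => h.trans_le (min_le_left c 0)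
    rw [gaussianPrivacyProfile_zero_of_nonpos (min_le_right c 0)]
    linarith [erf_strictMono (show -min c 0 < t by linarith)]

lemma add_sqrt_sq_add_div_eq_inv {ε : ℝ} (hε : 0 < ε) (b : ℝ) :
    (b + √(b ^ 2 + ε)) / ε = (√(b ^ 2 + ε) - b)⁻¹ := by
  have hsq : √(b ^ 2 + ε) ^ 2 = b ^ 2 + ε := sq_sqrt (by positivity)
  rw [div_eq_iff hε.ne', eq_comm, inv_mul_eq_iff_eq_mul₀ (sub_pos.2 (lt_sqrt_sq_add hε b)).ne']
  linear_combination -hsq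

theorem sigma_DP_OPT_tendsto_upper_bound_general (δ t : ℝ)
    (ht : 0 < t) (hterf : erf t = δ) (a : ℝ → ℝ)
    (ha : ∀ ε : ℝ, 0 < ε →
      erfc (a ε) - Real.exp ε * erfc (Real.sqrt ((a ε) ^ 2 + ε)) = 2 * δ) :
    Filter.Tendsto (fun ε : ℝ => (a ε + Real.sqrt ((a ε) ^ 2 + ε)) / ε)
      (nhdsWithin 0 (Set.Ioi 0)) (nhds (1 / (2 * t))) := by
  have ha_lim : Tendsto a (𝓝[>] 0) (𝓝 (-t)) :=
    tendsto_of_gaussianPrivacyProfile_eq ht fun ε hε => hterf ▸ ha ε hε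
  have hsqrt_lim : Tendsto (fun ε => √(a ε ^ 2 + ε)) (𝓝[>] 0) (𝓝 t) := by
    have h := ((ha_lim.pow 2).add (tendsto_nhdsWithin_of_tendsto_nhds tendsto_id)).sqrt
    rwa [neg_sq, add_zero, sqrt_sq ht.le] at h
  have hlim := (hsqrt_lim.sub ha_lim).inv₀ (by linarith)
  rw [sub_neg_eq_add, ← two_mul, ← one_div] at hlim
  refine hlim.congr' ?_
  filter_upwards [self_mem_nhdsWithin] with ε hε
  exact (add_sqrt_sq_add_div_eq_inv hε (a ε)).symm

/-- Fix `0 < δ < 1` and `t > 0` with `erf t = δ`. If `a : ℝ → ℝ` satisfies, for all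
`ε > 0`, `erfc (a ε) − e^ε · erfc (√((a ε)² + ε)) = 2δ`, then
`(a ε + √((a ε)² + ε))/ε → 1/(2t)` as `ε → 0⁺`. -/
theorem sigma_DP_OPT_tendsto_upper_bound (δ t : ℝ) (hδ0 : 0 < δ) (hδ1 : δ < 1)
    (ht : 0 < t) (hterf : erf t = δ) (a : ℝ → ℝ)
    (ha : ∀ ε : ℝ, 0 < ε →
      erfc (a ε) - Real.exp ε * erfc (Real.sqrt ((a ε) ^ 2 + ε)) = 2 * δ) :
    Filter.Tendsto (fun ε : ℝ => (a ε + Real.sqrt ((a ε) ^ 2 + ε)) / ε)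
      (nhdsWithin 0 (Set.Ioi 0)) (nhds (1 / (2 * t))) :=
  sigma_DP_OPT_tendsto_upper_bound_general δ t ht hterf a ha
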